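/- Let v_{k,i} ∈ S^{d-1} for k ∈ [K], i ∈ [n_k], with block means h_k and π̂_k = n_k/n. Define the modified contrastive loss Ľ(V) = −(1/τ)∑_k π̂_k (∑_{k'} π̂_{k'} α_{k,k'} h_kᵀ h_{k'})/(∑_{k'} π̂_{k'} α_{k,k'}) + (1/n)∑_{k₁,i₁} log((1/n)∑_{k₃,i₃} exp(v_{k₁,i₁}ᵀ v_{k₃,i₃}/τ)). Then Ľ(V) ≥ −(1/τ)∑_k π̂_k (∑_{k'} π̂_{k'} α_{k,k'} h_kᵀ h_{k'})/(∑_{k'} π̂_{k'} α_{k,k'}) + ∑_{k₁} π̂_{k₁} log(∑_{k₃} π̂_{k₃} exp(h_{k₁}ᵀ h_{k₃}/τ)), with equality if v_{k,i} = h_k for all k, i. -/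

import Mathlib

open scoped RealInnerProductSpace
open Finset Real Set

/-!
Only the log-partition term differs between the two sides, and it is handled by Jensen's
inequality twice. Replacing the vectors of each block `k₃` by their mean `h k₃` can only decrease
`∑ exp (⟪u, ·⟫ / τ)`, since `w ↦ exp (⟪u, w⟫ / τ)` is convex. Then
`u ↦ log ∑ₖ π̂ₖ exp (⟪u, h k⟫ / τ)` is a log-sum-exp of linear forms, hence convex, so its average
over block `k₁` dominates its value at the mean `h k₁`. Both steps are equalities when every
`v k i = h k`.
-/

theorem ConvexOn.map_card_inv_smul_sum_le {E ι : Type*} [AddCommGroup E] [Module ℝ E] {f : E → ℝ}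
    (hf : ConvexOn ℝ univ f) [Fintype ι] [Nonempty ι] (x : ι → E) :
    f ((Fintype.card ι : ℝ)⁻¹ • ∑ i, x i) ≤ (Fintype.card ι : ℝ)⁻¹ * ∑ i, f (x i) := by
  rw [smul_sum, mul_sum]
  exact hf.map_sum_le (fun _ _ => by positivity) (by simp) (fun _ _ => mem_univ _)

theorem convexOn_log_sum_mul_exp {ι : Type*} [Fintype ι] {p : ι → ℝ} (hp : ∀ j, 0 ≤ p j) :
    ConvexOn ℝ univ fun x : ι → ℝ => log (∑ j, p j * exp (x j)) := by
  by_cases hp0 : ∀ j, p j = 0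
  · simpa only [hp0, zero_mul, sum_const_zero, log_zero] using convexOn_const 0 convex_univ
  push Not at hp0
  obtain ⟨j₀, hj₀⟩ := hp0
  set S : (ι → ℝ) → ℝ := fun x => ∑ j, p j * exp (x j)
  have hS : ∀ x, 0 < S x := fun x =>
    (mul_pos ((hp j₀).lt_of_ne' hj₀) (exp_pos _)).trans_le
      (single_le_sum (fun j _ => mul_nonneg (hp j) (exp_pos _).le) (mem_univ j₀))
  refine ⟨convex_univ, fun x _ y _ a b ha hb hab => ?_⟩
  -- Convexity of `exp` at `x j - log (S x)` and `y j - log (S y)`; summing against `p` turns the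
  -- right-hand side into `a + b = 1` times `exp (a * log (S x) + b * log (S y))`.
  have hterm : ∀ j, exp (a * x j + b * y j) ≤
      exp (a * log (S x) + b * log (S y)) * (a * (exp (x j) / S x) + b * (exp (y j) / S y)) := by
    intro j
    have := convexOn_exp.2 (mem_univ (x j - log (S x))) (mem_univ (y j - log (S y))) ha hb hab
    simp only [smul_eq_mul, exp_sub, exp_log (hS x), exp_log (hS y)] at this
    calc exp (a * x j + b * y j)
        = exp (a * log (S x) + b * log (S y)) *
            exp (a * (x j - log (S x)) + b * (y j - log (S y))) := by
          rw [← exp_add]; ring_nf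
      _ ≤ _ := mul_le_mul_of_nonneg_left this (exp_pos _).le
  have hsum : S (a • x + b • y) ≤ exp (a * log (S x) + b * log (S y)) := by
    calc S (a • x + b • y) = ∑ j, p j * exp (a * x j + b * y j) := rfl
      _ ≤ ∑ j, p j * (exp (a * log (S x) + b * log (S y)) *
            (a * (exp (x j) / S x) + b * (exp (y j) / S y))) :=
          sum_le_sum fun j _ => mul_le_mul_of_nonneg_left (hterm j) (hp j)
      _ = exp (a * log (S x) + b * log (S y)) * (a * (S x / S x) + b * (S y / S y)) := by
          simp only [S, mul_sum, sum_div, mul_add, sum_add_distrib]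
          congr 1 <;> exact sum_congr rfl fun j _ => by ring
      _ = exp (a * log (S x) + b * log (S y)) := by
          rw [div_self (hS x).ne', div_self (hS y).ne', mul_one, mul_one, hab, mul_one]
  simpa only [smul_eq_mul] using (log_le_log (hS _) hsum).trans_eq (log_exp _)

section InnerProduct

variable {E : Type*} [NormedAddCommGroup E] [InnerProductSpace ℝ E]

theorem convexOn_exp_inner_div (u : E) (τ : ℝ) :
    ConvexOn ℝ univ fun w : E => exp (⟪u, w⟫ / τ) := by
  simpa [Function.comp_def, div_eq_inv_mul] using convexOn_exp.comp_linearMap (τ⁻¹ • innerₛₗ ℝ u)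

theorem convexOn_log_sum_mul_exp_inner_div {ι : Type*} [Fintype ι] {p : ι → ℝ}
    (hp : ∀ j, 0 ≤ p j) (w : ι → E) (τ : ℝ) :
    ConvexOn ℝ univ fun u : E => log (∑ j, p j * exp (⟪u, w j⟫ / τ)) := by
  simpa [Function.comp_def, div_eq_inv_mul, real_inner_comm] using
    (convexOn_log_sum_mul_exp hp).comp_linearMap (LinearMap.pi fun j => τ⁻¹ • innerₛₗ ℝ (w j))

section Blocks

variable {K : ℕ} {n : Fin K → ℕ} {N : ℕ}

theorem sum_div_mul_inv_mul_sum (hn : ∀ k, 0 < n k) (g : (k : Fin K) → Fin (n k) → ℝ) :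
    ∑ k, (n k : ℝ) / N * ((n k : ℝ)⁻¹ * ∑ i, g k i) = 1 / N * ∑ k, ∑ i, g k i := by
  rw [mul_sum]
  refine sum_congr rfl fun k _ => ?_
  have : (n k : ℝ) ≠ 0 := by exact_mod_cast (hn k).ne'
  field_simp

theorem one_div_mul_sum_sum_const (f : Fin K → ℝ) :
    1 / N * ∑ k, ∑ _i : Fin (n k), f k = ∑ k, (n k : ℝ) / N * f k := by
  simp only [sum_const, card_univ, Fintype.card_fin, nsmul_eq_mul, mul_sum]
  exact sum_congr rfl fun k _ => by ring

variable {v : (k : Fin K) → Fin (n k) → E} {h : Fin K → E}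

theorem sum_div_mul_exp_inner_div_le (hn : ∀ k, 0 < n k)
    (hmean : ∀ k, h k = (1 / (n k : ℝ)) • ∑ i, v k i) (u : E) (τ : ℝ) :
    ∑ k, (n k : ℝ) / N * exp (⟪u, h k⟫ / τ) ≤ 1 / N * ∑ k, ∑ i, exp (⟪u, v k i⟫ / τ) := by
  rw [← sum_div_mul_inv_mul_sum hn]
  refine sum_le_sum fun k _ => mul_le_mul_of_nonneg_left ?_ (by positivity)
  have : Nonempty (Fin (n k)) := ⟨⟨0, hn k⟩⟩
  simpa [hmean] using (convexOn_exp_inner_div u τ).map_card_inv_smul_sum_le (v k)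

theorem log_sum_div_mul_exp_inner_div_le (hn : ∀ k, 0 < n k)
    (hmean : ∀ k, h k = (1 / (n k : ℝ)) • ∑ i, v k i) (w : Fin K → E) (τ : ℝ) (k : Fin K) :
    log (∑ j, (n j : ℝ) / N * exp (⟪h k, w j⟫ / τ)) ≤
      (n k : ℝ)⁻¹ * ∑ i, log (∑ j, (n j : ℝ) / N * exp (⟪v k i, w j⟫ / τ)) := by
  have : Nonempty (Fin (n k)) := ⟨⟨0, hn k⟩⟩
  simpa [hmean] using
    (convexOn_log_sum_mul_exp_inner_div (fun j => by positivity) w τ).map_card_inv_smul_sum_le (v k)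

end Blocks

theorem sum_div_mul_log_sum_div_mul_exp_inner_div_le {K : ℕ} {n : Fin K → ℕ} {N : ℕ}
    {v : (k : Fin K) → Fin (n k) → E} {h : Fin K → E} (hn : ∀ k, 0 < n k)
    (hmean : ∀ k, h k = (1 / (n k : ℝ)) • ∑ i, v k i) (hN : N = ∑ k, n k) (τ : ℝ) :
    ∑ k₁, (n k₁ : ℝ) / N * log (∑ k₃, (n k₃ : ℝ) / N * exp (⟪h k₁, h k₃⟫ / τ)) ≤
      1 / N * ∑ k₁, ∑ i₁, log (1 / N * ∑ k₃, ∑ i₃, exp (⟪v k₁ i₁, v k₃ i₃⟫ / τ)) := by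
  have hweight : ∀ k, (0 : ℝ) < n k / N := fun k => by
    have : n k ≤ N := hN ▸ single_le_sum (fun _ _ => Nat.zero_le _) (mem_univ k)
    exact div_pos (by exact_mod_cast hn k) (by exact_mod_cast (hn k).trans_le this)
  calc ∑ k₁, (n k₁ : ℝ) / N * log (∑ k₃, (n k₃ : ℝ) / N * exp (⟪h k₁, h k₃⟫ / τ))
      ≤ ∑ k₁, (n k₁ : ℝ) / N * ((n k₁ : ℝ)⁻¹ *
          ∑ i₁, log (∑ k₃, (n k₃ : ℝ) / N * exp (⟪v k₁ i₁, h k₃⟫ / τ))) :=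
        sum_le_sum fun k₁ _ => mul_le_mul_of_nonneg_left
          (log_sum_div_mul_exp_inner_div_le hn hmean h τ k₁) (hweight k₁).le
    _ = 1 / N * ∑ k₁, ∑ i₁, log (∑ k₃, (n k₃ : ℝ) / N * exp (⟪v k₁ i₁, h k₃⟫ / τ)) :=
        sum_div_mul_inv_mul_sum hn _
    _ ≤ 1 / N * ∑ k₁, ∑ i₁, log (1 / N * ∑ k₃, ∑ i₃, exp (⟪v k₁ i₁, v k₃ i₃⟫ / τ)) := by
        refine mul_le_mul_of_nonneg_left (sum_le_sum fun k₁ _ => sum_le_sum fun i₁ _ => ?_)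
          (by positivity)
        exact log_le_log (sum_pos (fun k _ => mul_pos (hweight k) (exp_pos _)) ⟨k₁, mem_univ _⟩)
          (sum_div_mul_exp_inner_div_le hn hmean _ τ)

end InnerProduct

theorem stmt_9_general {d K : ℕ} (n : Fin K → ℕ) (hn : ∀ k, 0 < n k)
    (v : (k : Fin K) → Fin (n k) → EuclideanSpace ℝ (Fin d))
    (h : Fin K → EuclideanSpace ℝ (Fin d))
    (hmean : ∀ k, h k = (1 / (n k : ℝ)) • ∑ i, v k i)
    (N : ℕ) (hN : N = ∑ k, n k)
    (pihat : Fin K → ℝ) (hpi : ∀ k, pihat k = (n k : ℝ) / N)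
    (α : Fin K → Fin K → ℝ)
    (τ : ℝ)
    (Lcheck : ℝ)
    (hL : Lcheck =
        -(1 / τ) * ∑ k, pihat k *
          ((∑ k', pihat k' * α k k' * ⟪h k, h k'⟫) / (∑ k', pihat k' * α k k'))
        + (1 / (N : ℝ)) * ∑ k₁, ∑ i₁, Real.log
            ((1 / (N : ℝ)) * ∑ k₃, ∑ i₃, Real.exp (⟪v k₁ i₁, v k₃ i₃⟫ / τ))) :
    Lcheck ≥
      -(1 / τ) * ∑ k, pihat k *
        ((∑ k', pihat k' * α k k' * ⟪h k, h k'⟫) / (∑ k', pihat k' * α k k'))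
      + ∑ k₁, pihat k₁ * Real.log (∑ k₃, pihat k₃ * Real.exp (⟪h k₁, h k₃⟫ / τ))
    ∧ ((∀ k i, v k i = h k) →
      Lcheck =
        -(1 / τ) * ∑ k, pihat k *
          ((∑ k', pihat k' * α k k' * ⟪h k, h k'⟫) / (∑ k', pihat k' * α k k'))
        + ∑ k₁, pihat k₁ * Real.log (∑ k₃, pihat k₃ * Real.exp (⟪h k₁, h k₃⟫ / τ))) := by
  obtain rfl : pihat = fun k => (n k : ℝ) / N := funext hpi
  subst hL
  refine ⟨add_le_add_right (sum_div_mul_log_sum_div_mul_exp_inner_div_le hn hmean hN τ) _,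
    fun hvh => ?_⟩
  simp only [hvh, one_div_mul_sum_sum_const]

theorem stmt_9 {d K : ℕ} (n : Fin K → ℕ) (hn : ∀ k, 0 < n k)
    (v : (k : Fin K) → Fin (n k) → EuclideanSpace ℝ (Fin d))
    (hv : ∀ k i, ‖v k i‖ = 1)
    (h : Fin K → EuclideanSpace ℝ (Fin d))
    (hmean : ∀ k, h k = (1 / (n k : ℝ)) • ∑ i, v k i)
    (N : ℕ) (hN : N = ∑ k, n k)
    (pihat : Fin K → ℝ) (hpi : ∀ k, pihat k = (n k : ℝ) / N)
    (α : Fin K → Fin K → ℝ) (hα : ∀ k k', 0 ≤ α k k')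
    (hαpos : ∀ k, 0 < ∑ k', pihat k' * α k k')
    (τ : ℝ) (hτ : 0 < τ)
    (Lcheck : ℝ)
    (hL : Lcheck =
        -(1 / τ) * ∑ k, pihat k *
          ((∑ k', pihat k' * α k k' * ⟪h k, h k'⟫) / (∑ k', pihat k' * α k k'))
        + (1 / (N : ℝ)) * ∑ k₁, ∑ i₁, Real.log
            ((1 / (N : ℝ)) * ∑ k₃, ∑ i₃, Real.exp (⟪v k₁ i₁, v k₃ i₃⟫ / τ))) :
    Lcheck ≥
      -(1 / τ) * ∑ k, pihat k *
        ((∑ k', pihat k' * α k k' * ⟪h k, h k'⟫) / (∑ k', pihat k' * α k k'))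
      + ∑ k₁, pihat k₁ * Real.log (∑ k₃, pihat k₃ * Real.exp (⟪h k₁, h k₃⟫ / τ))
    ∧ ((∀ k i, v k i = h k) →
      Lcheck =
        -(1 / τ) * ∑ k, pihat k *
          ((∑ k', pihat k' * α k k' * ⟪h k, h k'⟫) / (∑ k', pihat k' * α k k'))
        + ∑ k₁, pihat k₁ * Real.log (∑ k₃, pihat k₃ * Real.exp (⟪h k₁, h k₃⟫ / τ))) :=
  stmt_9_general n hn v h hmean N hN pihat hpi α τ Lcheck hL
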